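/- arXiv:math/0503445 — 3 statements merged into one kernel-verified Lean document; each statement's English description precedes it below -/
import Mathlib

section
/- Let τ > 0 and ε > 0, and consider the Ornstein–Uhlenbeck setup with p(x) = (2πτ)^{-1/2} exp(−x²/(2τ)), k_ε(x,y) = (2πε)^{-1/2} exp(−(x−y)²/(2ε)), and p_ε(y) = ∫ k_ε(x,y) p(x) dx. Then the function φ₁(x) = x·exp(−x²/(4(τ+ε))) is an eigenfunction of the symmetric operator T_s with eigenvalue τ/(τ+ε): for every x ∈ ℝ, ∫ [k_ε(x,y)/√(p_ε(x) p_ε(y))] φ₁(y) p(y) dy = (τ/(τ+ε)) φ₁(x). -/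
open MeasureTheory Real

/-! Gaussians are closed under convolution, so `p_ε` is the centred Gaussian density of variance
`τ + ε`. The weights `p(y) / √(p_ε(x) p_ε(y))` and the Gaussian factor of `φ₁` then combine with
the kernel into a single Gaussian in `y`, of precision `(τ + ε) / (ετ)` and mean `τx / (τ + ε)`.
Completing the square, the integral is that mean times the Gaussian's mass, and the mass, together
with the normalising constants, is exactly `exp(−x²/(4(τ + ε)))`. -/

lemma integral_mul_exp_neg_mul_sq_eq_zero (a : ℝ) : ∫ y : ℝ, y * exp (-a * y ^ 2) = 0 := by
  have h := integral_neg_eq_self (fun y : ℝ ↦ y * exp (-a * y ^ 2)) volume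
  simp only [neg_sq, neg_mul, integral_neg] at h
  simp only [neg_mul]
  linarith

lemma exp_neg_mul_sq_add_mul (a b y : ℝ) (ha : a ≠ 0) :
    exp (-a * y ^ 2 + b * y) = exp (-a * (y - b / (2 * a)) ^ 2) * exp (b ^ 2 / (4 * a)) := by
  rw [← exp_add]
  congr 1
  field_simp
  ring

lemma integral_exp_neg_mul_sq_add_mul {a : ℝ} (ha : 0 < a) (b : ℝ) :
    ∫ y : ℝ, exp (-a * y ^ 2 + b * y) = √(π / a) * exp (b ^ 2 / (4 * a)) := by
  simp_rw [exp_neg_mul_sq_add_mul a b _ ha.ne', integral_mul_const]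
  rw [integral_sub_right_eq_self (fun y ↦ exp (-a * y ^ 2)), integral_gaussian]

lemma integral_mul_exp_neg_mul_sq_add_mul {a : ℝ} (ha : 0 < a) (b : ℝ) :
    ∫ y : ℝ, y * exp (-a * y ^ 2 + b * y)
      = b / (2 * a) * √(π / a) * exp (b ^ 2 / (4 * a)) := by
  set m := b / (2 * a)
  have hshift : ∀ y : ℝ, y * exp (-a * y ^ 2 + b * y)
      = ((y - m) + m) * exp (-a * (y - m) ^ 2) * exp (b ^ 2 / (4 * a)) := by
    intro y
    rw [exp_neg_mul_sq_add_mul a b y ha.ne', sub_add_cancel, mul_assoc]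
  simp_rw [hshift, integral_mul_const]
  rw [integral_sub_right_eq_self (fun y ↦ (y + m) * exp (-a * y ^ 2)) m]
  simp_rw [add_mul]
  rw [integral_add (integrable_mul_exp_neg_mul_sq ha) ((integrable_exp_neg_mul_sq ha).const_mul m),
    integral_mul_exp_neg_mul_sq_eq_zero, integral_const_mul, integral_gaussian, zero_add]

/-- `ProbabilityTheory.gaussianPDFReal 0 v`, with a real rather than `ℝ≥0` variance. -/
noncomputable def gaussDensity (v x : ℝ) : ℝ := (√(2 * π * v))⁻¹ * exp (-x ^ 2 / (2 * v))

lemma sqrt_gaussDensity_mul_gaussDensity (v x y : ℝ) :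
    √(gaussDensity v x * gaussDensity v y)
      = (√(2 * π * v))⁻¹ * exp (-(x ^ 2 + y ^ 2) / (4 * v)) := by
  have hsq : gaussDensity v x * gaussDensity v y
      = ((√(2 * π * v))⁻¹ * exp (-(x ^ 2 + y ^ 2) / (4 * v))) ^ 2 := by
    have hexp : exp (-x ^ 2 / (2 * v)) * exp (-y ^ 2 / (2 * v))
        = exp (-(x ^ 2 + y ^ 2) / (4 * v)) ^ 2 := by
      rw [← exp_add, ← exp_nat_mul]
      congr 1
      ring
    unfold gaussDensity
    linear_combination (√(2 * π * v))⁻¹ ^ 2 * hexp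
  rw [hsq, sqrt_sq (by positivity)]

section

variable {τ ε : ℝ} (hτ : 0 < τ) (hε : 0 < ε)
include hτ hε

lemma sqrt_pi_div_add_div_mul :
    √(π / ((τ + ε) / (2 * ε * τ))) = √(2 * π * ε) * √(2 * π * τ) / √(2 * π * (τ + ε)) := by
  rw [← sqrt_mul (by positivity), ← sqrt_div (by positivity)]
  congr 1
  field_simp

lemma integral_gaussDensity_sub_mul_gaussDensity (y : ℝ) :
    ∫ x, gaussDensity ε (x - y) * gaussDensity τ x = gaussDensity (τ + ε) y := by
  set A := (τ + ε) / (2 * ε * τ) with hA_def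
  have hA : 0 < A := by positivity
  have hintegrand : ∀ x, gaussDensity ε (x - y) * gaussDensity τ x
      = (√(2 * π * ε))⁻¹ * (√(2 * π * τ))⁻¹ * exp (-y ^ 2 / (2 * ε))
        * exp (-A * x ^ 2 + y / ε * x) := by
    intro x
    have hexp : exp (-(x - y) ^ 2 / (2 * ε)) * exp (-x ^ 2 / (2 * τ))
        = exp (-y ^ 2 / (2 * ε)) * exp (-A * x ^ 2 + y / ε * x) := by
      simp only [← exp_add, hA_def]
      congr 1
      field_simp
      ring
    unfold gaussDensity
    linear_combination (√(2 * π * ε))⁻¹ * (√(2 * π * τ))⁻¹ * hexp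
  have hexp : exp (-y ^ 2 / (2 * ε)) * exp ((y / ε) ^ 2 / (4 * A))
      = exp (-y ^ 2 / (2 * (τ + ε))) := by
    rw [← exp_add, hA_def]
    congr 1
    field_simp
    ring
  simp_rw [hintegrand, integral_const_mul, integral_exp_neg_mul_sq_add_mul hA, gaussDensity,
    ← hexp, hA_def, sqrt_pi_div_add_div_mul hτ hε]
  have hu : √(2 * π * ε) ≠ 0 := by positivity
  have hv : √(2 * π * τ) ≠ 0 := by positivity
  field_simp

lemma integral_symmetrizedKernel_mul_firstEigenfunction (x : ℝ) :
    ∫ y, gaussDensity ε (x - y) / √(gaussDensity (τ + ε) x * gaussDensity (τ + ε) y)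
        * (y * exp (-y ^ 2 / (4 * (τ + ε)))) * gaussDensity τ y
      = τ / (τ + ε) * (x * exp (-x ^ 2 / (4 * (τ + ε)))) := by
  simp_rw [sqrt_gaussDensity_mul_gaussDensity]
  set A := (τ + ε) / (2 * ε * τ) with hA_def
  have hA : 0 < A := by positivity
  set C := √(2 * π * (τ + ε)) * (√(2 * π * ε))⁻¹ * (√(2 * π * τ))⁻¹
    * exp (x ^ 2 / (4 * (τ + ε)) - x ^ 2 / (2 * ε))
  have hintegrand : ∀ y, gaussDensity ε (x - y)
        / ((√(2 * π * (τ + ε)))⁻¹ * exp (-(x ^ 2 + y ^ 2) / (4 * (τ + ε))))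
        * (y * exp (-y ^ 2 / (4 * (τ + ε)))) * gaussDensity τ y
      = C * (y * exp (-A * y ^ 2 + x / ε * y)) := by
    intro y
    have hexp : exp (-(x - y) ^ 2 / (2 * ε)) * (exp (-(x ^ 2 + y ^ 2) / (4 * (τ + ε))))⁻¹
          * exp (-y ^ 2 / (4 * (τ + ε))) * exp (-y ^ 2 / (2 * τ))
        = exp (x ^ 2 / (4 * (τ + ε)) - x ^ 2 / (2 * ε)) * exp (-A * y ^ 2 + x / ε * y) := by
      simp only [← exp_neg, ← exp_add, hA_def]
      congr 1
      field_simp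
      ring
    rw [div_eq_mul_inv, mul_inv, inv_inv]
    unfold gaussDensity
    linear_combination (√(2 * π * (τ + ε)) * (√(2 * π * ε))⁻¹ * (√(2 * π * τ))⁻¹ * y) * hexp
  have hexp : exp (x ^ 2 / (4 * (τ + ε)) - x ^ 2 / (2 * ε)) * exp ((x / ε) ^ 2 / (4 * A))
      = exp (-x ^ 2 / (4 * (τ + ε))) := by
    rw [← exp_add, hA_def]
    congr 1
    field_simp
    ring
  have hcoeff : x / ε / (2 * A) = τ / (τ + ε) * x := by
    rw [hA_def]
    field_simp
  simp_rw [hintegrand, integral_const_mul, integral_mul_exp_neg_mul_sq_add_mul hA, hcoeff, C,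
    ← hexp, hA_def, sqrt_pi_div_add_div_mul hτ hε]
  have hu : √(2 * π * ε) ≠ 0 := by positivity
  have hv : √(2 * π * τ) ≠ 0 := by positivity
  have hw : √(2 * π * (τ + ε)) ≠ 0 := by positivity
  field_simp

end

/-- In the Ornstein–Uhlenbeck setup, `φ₁(x) = x · exp(−x²/(4(τ+ε)))` is an eigenfunction
of the symmetric operator `T_s` with eigenvalue `τ/(τ+ε)`. -/
theorem stmt_6 (τ ε : ℝ) (hτ : 0 < τ) (hε : 0 < ε)
    (p : ℝ → ℝ) (hp : ∀ x, p x = (Real.sqrt (2 * π * τ))⁻¹ * Real.exp (-x ^ 2 / (2 * τ)))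
    (k : ℝ → ℝ → ℝ)
    (hk : ∀ x y, k x y = (Real.sqrt (2 * π * ε))⁻¹ * Real.exp (-(x - y) ^ 2 / (2 * ε)))
    (pe : ℝ → ℝ) (hpe : ∀ y, pe y = ∫ x, k x y * p x)
    (φ₁ : ℝ → ℝ) (hφ₁ : ∀ x, φ₁ x = x * Real.exp (-x ^ 2 / (4 * (τ + ε)))) :
    ∀ x, ∫ y, k x y / Real.sqrt (pe x * pe y) * φ₁ y * p y
      = τ / (τ + ε) * φ₁ x := by
  have hp' : p = gaussDensity τ := funext hp
  have hk' : k = fun x y ↦ gaussDensity ε (x - y) := funext₂ hk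
  have hpe' : pe = gaussDensity (τ + ε) := by
    ext y
    rw [hpe, hk', hp']
    exact integral_gaussDensity_sub_mul_gaussDensity hτ hε y
  intro x
  simp_rw [hpe', hφ₁, hk', hp']
  exact integral_symmetrizedKernel_mul_firstEigenfunction hτ hε x
end

section
/- (Paper's Lemma.) Let τ > 0 and ε > 0, and consider the Ornstein–Uhlenbeck setup with p(x) = (2πτ)^{-1/2} exp(−x²/(2τ)), k_ε(x,y) = (2πε)^{-1/2} exp(−(x−y)²/(2ε)), p_ε(y) = ∫ k_ε(x,y) p(x) dx, and symmetric operator T_s φ(x) = ∫ [k_ε(x,y)/√(p_ε(x) p_ε(y))] φ(y) p(y) dy. Then for every natural number m there exists a real polynomial q_m of degree exactly m such that the function φ_m(x) = q_m(x)·exp(−x²/(4(τ+ε))) satisfies T_s φ_m = (τ/(τ+ε))^m φ_m, i.e., for every x ∈ ℝ, ∫ [k_ε(x,y)/√(p_ε(x) p_ε(y))] φ_m(y) p(y) dy = (τ/(τ+ε))^m φ_m(x). -/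
/-!
Write `s = τ + ε`, `r = τ / s`, `v = ετ / s` and `g_w` for the centred normal density of
variance `w`. Then `p = g_τ`, `k_ε(x, y) = g_ε(x - y)`, and the factorisation
`g_ε(x - y) g_τ(y) = g_s(x) g_v(y - r x)` (joint density = marginal × conditional) shows
`p_ε = g_s`. Since `g_s(x) = (2πs)^{-1/2} exp(-x²/(4s))²`, the same factorisation gives
`T_s (q · exp(-x²/(4s))) = exp(-x²/(4s)) · (G_v q)(r x)`, where `G_v` is convolution with `g_v`.
On polynomials `G_v q = q + (lower order terms)`, so `q ↦ (G_v q)(r ·)` is triangular on the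
monomials with the pairwise distinct diagonal entries `r ^ k`, hence has an eigenpolynomial of
every degree.
-/

open MeasureTheory Real Polynomial

theorem Polynomial.degree_sub_smul_eq_of_degree_sub_smul_lt {K : Type*} [Field K]
    {w u : K[X]} {a b : K} (hu : u ≠ 0) (hab : a ≠ b) (hw : (w - a • u).degree < u.natDegree) :
    (w - b • u).degree = u.natDegree := by
  rw [show w - b • u = (w - a • u) + C (a - b) * u by rw [← smul_eq_C_mul, sub_smul]; abel,
    degree_add_eq_right_of_degree_lt] <;>
    rw [degree_C_mul (sub_ne_zero.mpr hab), degree_eq_natDegree hu]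
  exact hw

/- `f - μ n` is injective, hence bijective, on polynomials of degree `< n`; the eigenvector is
`X ^ n` plus the preimage of `-(f - μ n) (X ^ n)`. -/
theorem Polynomial.exists_degree_eq_and_apply_eq_smul {K : Type*} [Field K]
    (f : K[X] →ₗ[K] K[X]) (μ : ℕ → K) (n : ℕ)
    (hf : ∀ k ≤ n, ∀ q : K[X], q.natDegree ≤ k → (f q - μ k • q).degree < k)
    (hμ : ∀ k < n, μ k ≠ μ n) :
    ∃ q : K[X], q.degree = n ∧ f q = μ n • q := by
  set g : K[X] →ₗ[K] K[X] := f - μ n • LinearMap.id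
  have hg : ∀ u : K[X], u ≠ 0 → u.natDegree < n → (g u).degree = u.natDegree := fun u hu0 hu =>
    degree_sub_smul_eq_of_degree_sub_smul_lt hu0 (hμ _ hu) (hf _ hu.le u le_rfl)
  have maps : Set.MapsTo g (degreeLT K n) (degreeLT K n) := by
    intro u hu
    rw [SetLike.mem_coe, mem_degreeLT] at hu ⊢
    rcases eq_or_ne u 0 with rfl | hu0
    · simp
    rw [← natDegree_lt_iff_degree_lt hu0] at hu
    rw [hg u hu0 hu]
    exact_mod_cast hu
  have : FiniteDimensional K (degreeLT K n) := (degreeLTEquiv K n).symm.finiteDimensional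
  have inj : Function.Injective (g.restrict maps) := by
    rw [← LinearMap.ker_eq_bot, Submodule.eq_bot_iff]
    rintro ⟨u, hu⟩ hgu
    replace hgu : g u = 0 := congrArg Subtype.val hgu
    rw [Submodule.mk_eq_zero]
    by_contra hu0
    rw [mem_degreeLT, ← natDegree_lt_iff_degree_lt hu0] at hu
    simpa [hgu] using hg u hu0 hu
  have hXn : -g (X ^ n) ∈ degreeLT K n := by
    rw [mem_degreeLT, degree_neg]
    exact hf n le_rfl _ (natDegree_X_pow_le n)
  obtain ⟨⟨u, hu⟩, hgu⟩ := LinearMap.injective_iff_surjective.mp inj ⟨_, hXn⟩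
  rw [mem_degreeLT] at hu
  refine ⟨X ^ n + u, ?_, ?_⟩
  · rw [degree_add_eq_left_of_degree_lt (by rwa [degree_X_pow]), degree_X_pow]
  · have hgu : g (X ^ n + u) = 0 := by
      rw [map_add, show g u = -g (X ^ n) from congrArg Subtype.val hgu, add_neg_cancel]
    rwa [LinearMap.sub_apply, sub_eq_zero] at hgu

theorem Polynomial.eval_add_eq_sum_hasseDeriv {R : Type*} [CommSemiring R] (q : R[X]) {N : ℕ}
    (hq : q.natDegree ≤ N) (c z : R) :
    q.eval (z + c) = ∑ j ∈ Finset.range (N + 1), (hasseDeriv j q).eval c * z ^ j := by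
  rw [← taylor_eval, eval_eq_sum_range' (n := N + 1) (by rw [natDegree_taylor]; omega)]
  simp only [taylor_coeff]

theorem Polynomial.coeff_sum_smul_hasseDeriv {R : Type*} [Semiring R] (w : ℕ → R) (N : ℕ)
    {q : R[X]} {i : ℕ} (hq : q.natDegree ≤ i) :
    (∑ j ∈ Finset.range (N + 1), w j • hasseDeriv j q).coeff i = w 0 * q.coeff i := by
  rw [finsetSum_coeff, Finset.sum_eq_single_of_mem 0 (by simp)]
  · rw [coeff_smul, hasseDeriv_zero', smul_eq_mul]
  · intro j _ hj
    rw [coeff_smul, hasseDeriv_coeff, q.coeff_eq_zero_of_natDegree_lt (by omega), mul_zero,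
      smul_zero]

-- `gaussianPDFReal 0 ⟨v, _⟩` with a real variance, written exactly as `p` and `k` are.
noncomputable def gaussianDensity (v x : ℝ) : ℝ :=
  (√(2 * π * v))⁻¹ * exp (-x ^ 2 / (2 * v))

section gaussianDensity

variable {v : ℝ}

theorem integral_gaussianDensity_sub (hv : 0 < v) (c : ℝ) :
    ∫ x, gaussianDensity v (x - c) = 1 :=
  ProbabilityTheory.integral_gaussianPDFReal_eq_one c (v := ⟨v, hv.le⟩) (ne_of_gt hv)

theorem integrable_pow_mul_gaussianDensity (hv : 0 < v) (j : ℕ) :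
    Integrable fun z => z ^ j * gaussianDensity v z := by
  have h := integrable_rpow_mul_exp_neg_mul_sq (b := (2 * v)⁻¹) (by positivity) (s := j)
    (by linarith [j.cast_nonneg (α := ℝ)])
  refine (h.const_mul (√(2 * π * v))⁻¹).congr (ae_of_all _ fun z => ?_)
  simp only [gaussianDensity, rpow_natCast]
  ring_nf

theorem gaussianDensity_eq_mul_exp_sq (x : ℝ) :
    gaussianDensity v x = (√(2 * π * v))⁻¹ * exp (-x ^ 2 / (4 * v)) ^ 2 := by
  rw [gaussianDensity, ← exp_nat_mul]
  congr 2
  by_cases hv : v = 0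
  · simp [hv]
  field_simp
  ring

theorem sqrt_gaussianDensity_mul_gaussianDensity (x y : ℝ) :
    √(gaussianDensity v x * gaussianDensity v y)
      = (√(2 * π * v))⁻¹ * (exp (-x ^ 2 / (4 * v)) * exp (-y ^ 2 / (4 * v))) := by
  rw [gaussianDensity_eq_mul_exp_sq, gaussianDensity_eq_mul_exp_sq, ← sqrt_sq (by positivity :
    0 ≤ (√(2 * π * v))⁻¹ * (exp (-x ^ 2 / (4 * v)) * exp (-y ^ 2 / (4 * v))))]
  ring_nf

end gaussianDensity

section ornsteinUhlenbeck

variable {τ ε : ℝ}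

-- Joint density of `(X, Y)` with `Y ∼ N(0, τ)`, `X - Y ∼ N(0, ε)`, as marginal × conditional.
theorem gaussianDensity_sub_mul_gaussianDensity (hτ : 0 < τ) (hε : 0 < ε) (x y : ℝ) :
    gaussianDensity ε (x - y) * gaussianDensity τ y
      = gaussianDensity (τ + ε) x * gaussianDensity (ε * τ / (τ + ε)) (y - τ / (τ + ε) * x) := by
  have hsqrt : √(2 * π * ε) * √(2 * π * τ)
      = √(2 * π * (τ + ε)) * √(2 * π * (ε * τ / (τ + ε))) := by
    rw [← sqrt_mul (by positivity), ← sqrt_mul (by positivity)]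
    congr 1
    field_simp
  simp only [gaussianDensity]
  rw [mul_mul_mul_comm, mul_mul_mul_comm (√(2 * π * (τ + ε)))⁻¹, ← mul_inv, ← mul_inv, hsqrt,
    ← exp_add, ← exp_add]
  congr 2
  field_simp
  ring

theorem integral_gaussianDensity_sub_mul_gaussianDensity (hτ : 0 < τ) (hε : 0 < ε) (y : ℝ) :
    ∫ x, gaussianDensity ε (x - y) * gaussianDensity τ x = gaussianDensity (τ + ε) y := by
  have hsymm : ∀ x, gaussianDensity ε (x - y) = gaussianDensity ε (y - x) := fun x => by
    rw [gaussianDensity, gaussianDensity, ← neg_sub, neg_sq]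
  simp only [hsymm, gaussianDensity_sub_mul_gaussianDensity hτ hε y]
  rw [integral_const_mul, integral_gaussianDensity_sub (by positivity), mul_one]

theorem gaussianDensity_sub_div_sqrt_mul_eq (hτ : 0 < τ) (hε : 0 < ε) (x y Q : ℝ) :
    gaussianDensity ε (x - y) / √(gaussianDensity (τ + ε) x * gaussianDensity (τ + ε) y) *
        (Q * exp (-y ^ 2 / (4 * (τ + ε)))) * gaussianDensity τ y
      = exp (-x ^ 2 / (4 * (τ + ε))) *
          (Q * gaussianDensity (ε * τ / (τ + ε)) (y - τ / (τ + ε) * x)) := by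
  calc _ = gaussianDensity ε (x - y) * gaussianDensity τ y /
        √(gaussianDensity (τ + ε) x * gaussianDensity (τ + ε) y) *
        (Q * exp (-y ^ 2 / (4 * (τ + ε)))) := by ring
    _ = _ := by
      rw [gaussianDensity_sub_mul_gaussianDensity hτ hε, sqrt_gaussianDensity_mul_gaussianDensity,
        gaussianDensity_eq_mul_exp_sq (v := τ + ε) x]
      have : √(2 * π * (τ + ε)) ≠ 0 := by positivity
      field_simp

end ornsteinUhlenbeck

-- `q ↦ (c ↦ ∫ q(y) g_v(y - c) dy)`, with its Taylor expansion cut at order `N` to make it linear;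
-- it is exact on polynomials of degree `≤ N` (`eval_gaussianSmoothing`).
noncomputable def gaussianSmoothing (v : ℝ) (N : ℕ) : ℝ[X] →ₗ[ℝ] ℝ[X] :=
  ∑ j ∈ Finset.range (N + 1), (∫ z, z ^ j * gaussianDensity v z) • hasseDeriv j

section gaussianSmoothing

variable {v : ℝ}

theorem eval_gaussianSmoothing (hv : 0 < v) (N : ℕ) {q : ℝ[X]} (hq : q.natDegree ≤ N) (c : ℝ) :
    (gaussianSmoothing v N q).eval c = ∫ y, q.eval y * gaussianDensity v (y - c) := by
  have hshift := integral_sub_right_eq_self (μ := volume)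
    (fun z => q.eval (z + c) * gaussianDensity v z) c
  simp only [sub_add_cancel] at hshift
  simp only [hshift, eval_add_eq_sum_hasseDeriv q hq c, Finset.sum_mul, mul_assoc]
  rw [integral_finsetSum _ fun j _ => (integrable_pow_mul_gaussianDensity hv j).const_mul _]
  simp only [integral_const_mul, gaussianSmoothing, LinearMap.sum_apply, LinearMap.smul_apply,
    eval_finsetSum, eval_smul, smul_eq_mul]
  exact Finset.sum_congr rfl fun _ _ => mul_comm _ _

theorem coeff_gaussianSmoothing (hv : 0 < v) (N : ℕ) {q : ℝ[X]} {i : ℕ} (hq : q.natDegree ≤ i) :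
    (gaussianSmoothing v N q).coeff i = q.coeff i := by
  have h0 : ∫ z, z ^ 0 * gaussianDensity v z = 1 := by
    simpa using integral_gaussianDensity_sub hv 0
  rw [gaussianSmoothing, LinearMap.sum_apply]
  simp only [LinearMap.smul_apply]
  rw [coeff_sum_smul_hasseDeriv _ N hq, h0, one_mul]

theorem degree_gaussianSmoothing_comp_sub_lt (hv : 0 < v) (N : ℕ) (r : ℝ) {q : ℝ[X]} {k : ℕ}
    (hq : q.natDegree ≤ k) :
    ((gaussianSmoothing v N q).comp (C r * X) - r ^ k • q).degree < k := by
  rw [degree_lt_iff_coeff_zero]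
  intro i hi
  rw [coeff_sub, comp_C_mul_X_coeff, coeff_gaussianSmoothing hv N (hq.trans hi), coeff_smul,
    smul_eq_mul]
  rcases hi.eq_or_lt with rfl | hlt
  · ring
  · rw [q.coeff_eq_zero_of_natDegree_lt (hq.trans_lt hlt)]
    ring

end gaussianSmoothing

/-- (Paper's Lemma.) In the Ornstein–Uhlenbeck setup, for every natural number `m` there
is a real polynomial `q_m` of degree exactly `m` such that
`φ_m(x) = q_m(x) · exp(−x²/(4(τ+ε)))` is an eigenfunction of the symmetric operator `T_s`
with eigenvalue `(τ/(τ+ε))^m`. -/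
theorem stmt_7 (τ ε : ℝ) (hτ : 0 < τ) (hε : 0 < ε)
    (p : ℝ → ℝ) (hp : ∀ x, p x = (Real.sqrt (2 * π * τ))⁻¹ * Real.exp (-x ^ 2 / (2 * τ)))
    (k : ℝ → ℝ → ℝ)
    (hk : ∀ x y, k x y = (Real.sqrt (2 * π * ε))⁻¹ * Real.exp (-(x - y) ^ 2 / (2 * ε)))
    (pe : ℝ → ℝ) (hpe : ∀ y, pe y = ∫ x, k x y * p x) :
    ∀ m : ℕ, ∃ q : Polynomial ℝ, q.degree = (m : ℕ) ∧
      ∀ x, ∫ y, k x y / Real.sqrt (pe x * pe y) *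
            (q.eval y * Real.exp (-y ^ 2 / (4 * (τ + ε)))) * p y
        = (τ / (τ + ε)) ^ m * (q.eval x * Real.exp (-x ^ 2 / (4 * (τ + ε)))) := by
  intro m
  have hp' : ∀ x, p x = gaussianDensity τ x := hp
  have hk' : ∀ x y, k x y = gaussianDensity ε (x - y) := hk
  have hpe' : ∀ y, pe y = gaussianDensity (τ + ε) y := fun y => by
    simp only [hpe, hk', hp', integral_gaussianDensity_sub_mul_gaussianDensity hτ hε]
  set r := τ / (τ + ε)
  have hv : 0 < ε * τ / (τ + ε) := by positivity
  have hr : r < 1 := (div_lt_one (by positivity)).mpr (by linarith)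
  obtain ⟨q, hq, hAq⟩ := exists_degree_eq_and_apply_eq_smul
    ((aeval (C r * X)).toLinearMap ∘ₗ gaussianSmoothing (ε * τ / (τ + ε)) m) (r ^ ·) m
    (fun _ _ _ hq => by
      simpa [← comp_eq_aeval] using degree_gaussianSmoothing_comp_sub_lt hv m r hq)
    (fun _ hlt => (pow_lt_pow_right_of_lt_one₀ (by positivity) hr hlt).ne')
  refine ⟨q, hq, fun x => ?_⟩
  have hAx : (gaussianSmoothing (ε * τ / (τ + ε)) m q).eval (r * x) = r ^ m * q.eval x := by
    simpa [← comp_eq_aeval, eval_comp] using congrArg (eval x) hAq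
  simp only [hk', hp', hpe', gaussianDensity_sub_div_sqrt_mul_eq hτ hε, integral_const_mul]
  rw [← eval_gaussianSmoothing hv m (natDegree_eq_of_degree_eq_some hq).le, hAx]
  ring
end

section
/- Let τ > 0 and ε > 0, and set c = τ(τ+ε)/(2τ+ε). Then the function ψ₂(x) = x² − c is an eigenfunction of the backward operator T_b of the Ornstein–Uhlenbeck setup with eigenvalue (τ/(τ+ε))²: for every x ∈ ℝ, [∫_ℝ k_ε(x,y) (y² − c) p(y) dy] / p_ε(x) = (τ/(τ+ε))² (x² − c). -/
/-!
For fixed `x`, the product `k_ε(x, y) p(y)` of the two Gaussian densities is, after completing the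
square in `y`, a constant times the density of `N(m, v)` with `m = τx/(τ+ε)` and
`v = τε/(τ+ε)` (Bayes' rule for a Gaussian prior and a Gaussian likelihood). The constant cancels
in `T_b`, so `T_b ψ(x)` is the expectation of `ψ` under `N(m, v)`. For `ψ(y) = y² − c` this is
`m² + v − c`, and the choice of `c` makes `v − c = −(τ/(τ+ε))² c`.
-/

open MeasureTheory Real ProbabilityTheory NNReal

lemma integral_sq_gaussianReal (μ : ℝ) (v : ℝ≥0) : ∫ x, x ^ 2 ∂gaussianReal μ v = μ ^ 2 + v := by
  have h := variance_eq_sub (memLp_id_gaussianReal (μ := μ) (v := v) 2)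
  rw [variance_id_gaussianReal] at h
  change (v : ℝ) = (∫ x, x ^ 2 ∂gaussianReal μ v) - (∫ x, x ∂gaussianReal μ v) ^ 2 at h
  rw [integral_id_gaussianReal] at h
  linarith

lemma gaussianPDFReal_mul_gaussianPDFReal (μ₁ μ₂ : ℝ) {v₁ v₂ : ℝ≥0} (h₁ : v₁ ≠ 0)
    (h₂ : v₂ ≠ 0) (x : ℝ) :
    gaussianPDFReal μ₁ v₁ x * gaussianPDFReal μ₂ v₂ x =
      gaussianPDFReal μ₁ (v₁ + v₂) μ₂ *
        gaussianPDFReal ((v₂ * μ₁ + v₁ * μ₂) / (v₁ + v₂)) (v₁ * v₂ / (v₁ + v₂)) x := by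
  have hv₁ : (0 : ℝ) < v₁ := by positivity
  have hv₂ : (0 : ℝ) < v₂ := by positivity
  have hs : (0 : ℝ) < v₁ + v₂ := by positivity
  simp only [gaussianPDFReal, NNReal.coe_add, NNReal.coe_mul, NNReal.coe_div]
  have hsqrt : √(2 * π * v₁) * √(2 * π * v₂)
      = √(2 * π * (v₁ + v₂)) * √(2 * π * (v₁ * v₂ / (v₁ + v₂))) := by
    rw [← sqrt_mul (by positivity), ← sqrt_mul (by positivity)]
    congr 1
    field_simp
  have hexp : -(x - μ₁) ^ 2 / (2 * v₁) + -(x - μ₂) ^ 2 / (2 * v₂)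
      = -(μ₂ - μ₁) ^ 2 / (2 * (v₁ + v₂)) +
        -(x - (v₂ * μ₁ + v₁ * μ₂) / (v₁ + v₂)) ^ 2 / (2 * (v₁ * v₂ / (v₁ + v₂))) := by
    field_simp
    ring
  calc _ = (√(2 * π * v₁) * √(2 * π * v₂))⁻¹ *
        rexp (-(x - μ₁) ^ 2 / (2 * v₁) + -(x - μ₂) ^ 2 / (2 * v₂)) := by
        rw [exp_add, mul_inv]; ring
    _ = _ := by rw [hsqrt, hexp, exp_add, mul_inv]; ring

lemma integral_mul_gaussianPDFReal_mul_gaussianPDFReal_div (f : ℝ → ℝ) (μ₁ μ₂ : ℝ)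
    {v₁ v₂ : ℝ≥0} (h₁ : v₁ ≠ 0) (h₂ : v₂ ≠ 0) :
    (∫ x, f x * (gaussianPDFReal μ₁ v₁ x * gaussianPDFReal μ₂ v₂ x)) /
        ∫ x, gaussianPDFReal μ₁ v₁ x * gaussianPDFReal μ₂ v₂ x =
      ∫ x, f x ∂gaussianReal ((v₂ * μ₁ + v₁ * μ₂) / (v₁ + v₂)) (v₁ * v₂ / (v₁ + v₂)) := by
  have hv : v₁ * v₂ / (v₁ + v₂) ≠ 0 := by positivity
  have hC := gaussianPDFReal_pos μ₁ μ₂ (v := v₁ + v₂) (by positivity)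
  simp only [gaussianPDFReal_mul_gaussianPDFReal μ₁ μ₂ h₁ h₂, mul_left_comm (f _),
    integral_const_mul, integral_gaussianPDFReal_eq_one _ hv,
    integral_gaussianReal_eq_integral_smul hv, smul_eq_mul, mul_comm (f _)]
  field_simp

/-- With `c = τ(τ+ε)/(2τ+ε)`, the function `ψ₂(x) = x² − c` is an eigenfunction of the
Ornstein–Uhlenbeck backward operator `T_b ψ (x) = (∫ k_ε x y * ψ y * p y dy) / p_ε x`
with eigenvalue `(τ/(τ+ε))²`. -/
theorem stmt_9 (τ ε : ℝ) (hτ : 0 < τ) (hε : 0 < ε)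
    (c : ℝ) (hc : c = τ * (τ + ε) / (2 * τ + ε))
    (p : ℝ → ℝ) (hp : ∀ x, p x = (Real.sqrt (2 * π * τ))⁻¹ * Real.exp (-x ^ 2 / (2 * τ)))
    (k : ℝ → ℝ → ℝ)
    (hk : ∀ x y, k x y = (Real.sqrt (2 * π * ε))⁻¹ * Real.exp (-(x - y) ^ 2 / (2 * ε)))
    (pe : ℝ → ℝ) (hpe : ∀ x, pe x = ∫ y, k x y * p y) :
    ∀ x, (∫ y, k x y * (y ^ 2 - c) * p y) / pe x
      = (τ / (τ + ε)) ^ 2 * (x ^ 2 - c) := by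
  intro x
  lift τ to ℝ≥0 using hτ.le
  lift ε to ℝ≥0 using hε.le
  have hp' : ∀ y, p y = gaussianPDFReal 0 τ y := fun y => by
    rw [hp, gaussianPDFReal, sub_zero]
  have hk' : ∀ y, k x y = gaussianPDFReal x ε y := fun y => by
    rw [hk, gaussianPDFReal, ← neg_sub, neg_sq]
  have hnum : ∫ y, k x y * (y ^ 2 - c) * p y
      = ∫ y, (y ^ 2 - c) * (gaussianPDFReal 0 τ y * gaussianPDFReal x ε y) := by
    congr with y
    rw [hk', hp']
    ring
  have hden : pe x = ∫ y, gaussianPDFReal 0 τ y * gaussianPDFReal x ε y := by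
    simp only [hpe, hk', hp', mul_comm]
  rw [hnum, hden, integral_mul_gaussianPDFReal_mul_gaussianPDFReal_div _ _ _
      (NNReal.coe_pos.1 hτ).ne' (NNReal.coe_pos.1 hε).ne',
    integral_sub (f := fun y => y ^ 2) (memLp_id_gaussianReal 2).integrable_sq
      (integrable_const c),
    integral_sq_gaussianReal, integral_const, probReal_univ, one_smul, hc]
  push_cast
  field_simp
  ring
end
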